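/- Let E be a directed graph and Ẽ a Drinen–Tomforde desingularization. Then E has finite ancestry if and only if Ẽ has finite ancestry, where a graph has finite ancestry if every pair of vertices has at most finitely many cycle-free minimal ancestry pairs. -/
import Mathlib


/-- A directed graph: edges `E`, vertices `V`, range and source maps. -/
structure DirGraph where
  V : Type
  E : Type
  r : E → V
  s : E → V

/-- Shift an infinite path (sequence of edges) by `p`. -/
def shift (p : ℕ) {α : Type} (x : ℕ → α) : ℕ → α := fun i => x (i + p)

namespace DirGraph

variable (G : DirGraph)

/-- `IsPath G v l u` : the list of edges `l` is a finite path with range `v` and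
source `u` (edges are composed so that `s eᵢ = r eᵢ₊₁`). -/
inductive IsPath : G.V → List G.E → G.V → Prop
  | nil (v : G.V) : IsPath v [] v
  | cons (e : G.E) {l : List G.E} {u : G.V} :
      IsPath (G.s e) l u → IsPath (G.r e) (e :: l) u

/-- An infinite path: a sequence of edges with `s(xᵢ) = r(xᵢ₊₁)`. -/
def InfPath (x : ℕ → G.E) : Prop := ∀ i, G.s (x i) = G.r (x (i + 1))

/-- Prepend a finite path (list of edges) to an infinite path. -/
def prepend (l : List G.E) (x : ℕ → G.E) : ℕ → G.E :=
  fun i => if h : i < l.length then l.get ⟨i, h⟩ else x (i - l.length)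

/-- A cycle: a nonempty finite path with equal range and source. -/
def IsCycle (c : List G.E) : Prop := c ≠ [] ∧ ∃ u, G.IsPath u c u

/-- A finite path contains a cycle if some (contiguous) subpath is a cycle. -/
def ContainsCycle (l : List G.E) : Prop :=
  ∃ p c q, l = p ++ c ++ q ∧ G.IsCycle c

/-- A simple cycle: a cycle containing no other cycle as a proper subpath. -/
def IsSimpleCycle (c : List G.E) : Prop :=
  G.IsCycle c ∧ ∀ p c' q, c = p ++ c' ++ q → G.IsCycle c' → c' = c

/-- A pair of finite paths is minimal if no nontrivial common final segment
can be factored out. -/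
def Minimal (a b : List G.E) : Prop :=
  ∀ a' b' n, a = a' ++ n → b = b' ++ n → n = []

/-- No cycle of `G` has an entrance: for every edge `f` on a cycle, `f` is the
only edge with range `r f`. -/
def NoCycleHasEntrance : Prop :=
  ∀ u c, G.IsCycle c → G.IsPath u c u → ∀ f ∈ c, ∀ e, G.r e = G.r f → e = f

/-- Row-finite: every vertex receives only finitely many edges. -/
def RowFinite : Prop := ∀ v, {e : G.E | G.r e = v}.Finite

/-- No sources: every vertex receives an edge. -/
def NoSources : Prop := ∀ v : G.V, ∃ e, G.r e = v

/-- Minimal cycle-free ancestry pair for the vertices `v, w`. -/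
def MCFPair (v w : G.V) (a b : List G.E) : Prop :=
  (∃ u, G.IsPath v a u ∧ G.IsPath w b u) ∧ G.Minimal a b ∧
    ¬G.ContainsCycle a ∧ ¬G.ContainsCycle b

end DirGraph

/-- A Drinen–Tomforde desingularization of the graph `E`: a graph `F` together
with an embedding `ι` of the vertices of `E`, a range/source-preserving
bijection `φ` from finite paths of `E` to finite paths of `F` with both
endpoints in `ι(E^0)` compatible with composition, such that every vertex of
`F` outside `ι(E^0)` (i.e. on an added tail) receives exactly one edge and is
the source of exactly one edge, and every cycle of `F` meets `ι(E^0)`. -/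
structure Desing (E F : DirGraph) where
  ι : E.V → F.V
  ι_inj : Function.Injective ι
  φ : List E.E → List F.E
  φ_path : ∀ (v u : E.V) (l : List E.E), E.IsPath v l u → F.IsPath (ι v) (φ l) (ι u)
  φ_inj : ∀ l l' : List E.E, (∃ v u, E.IsPath v l u) → (∃ v u, E.IsPath v l' u) →
    φ l = φ l' → l = l'
  φ_surj : ∀ (v u : E.V) (m : List F.E), F.IsPath (ι v) m (ι u) →
    ∃ l : List E.E, E.IsPath v l u ∧ φ l = m
  φ_comp : ∀ (v u t : E.V) (l m : List E.E), E.IsPath v l u → E.IsPath u m t →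
    φ (l ++ m) = φ l ++ φ m
  tail_rng : ∀ w : F.V, (¬∃ v : E.V, ι v = w) → ∃! e : F.E, F.r e = w
  tail_src : ∀ w : F.V, (¬∃ v : E.V, ι v = w) → ∃! e : F.E, F.s e = w
  tail_acyclic : ∀ (u : F.V) (c : List F.E), F.IsCycle c → F.IsPath u c u →
    ∃ e ∈ c, ∃ v : E.V, ι v = F.r e

/-- A graph has finite ancestry if every pair of vertices has at most finitely
many cycle-free minimal ancestry pairs. -/
def DirGraph.FiniteAncestry (G : DirGraph) : Prop :=
  ∀ v w : G.V, {p : List G.E × List G.E | G.MCFPair v w p.1 p.2}.Finite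


namespace DirGraph

variable {G : DirGraph}

lemma isPath_nil_iff {v u : G.V} : G.IsPath v [] u ↔ v = u := by
  constructor
  · rintro h; cases h; rfl
  · rintro rfl; exact .nil v

lemma isPath_cons_iff {v u : G.V} {e : G.E} {l : List G.E} :
    G.IsPath v (e :: l) u ↔ v = G.r e ∧ G.IsPath (G.s e) l u := by
  constructor
  · rintro h; cases h; exact ⟨rfl, by assumption⟩
  · rintro ⟨rfl, h⟩; exact .cons e h

lemma isPath_src_eq {v u u' : G.V} {l : List G.E} (h : G.IsPath v l u)
    (h' : G.IsPath v l u') : u = u' := by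
  induction l generalizing v with
  | nil => rw [isPath_nil_iff] at h h'; exact h.symm.trans h'
  | cons e t ih =>
    rw [isPath_cons_iff] at h h'
    exact ih h.2 h'.2

lemma isPath_rng_eq {v v' u u' : G.V} {l : List G.E} (h : G.IsPath v l u)
    (h' : G.IsPath v' l u') (hl : l ≠ []) : v = v' := by
  cases l with
  | nil => exact absurd rfl hl
  | cons e t =>
    rw [isPath_cons_iff] at h h'
    exact h.1.trans h'.1.symm

lemma isPath_append {v u : G.V} {l m : List G.E} :
    G.IsPath v (l ++ m) u ↔ ∃ z, G.IsPath v l z ∧ G.IsPath z m u := by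
  induction l generalizing v with
  | nil =>
    simp only [List.nil_append]
    constructor
    · intro h; exact ⟨v, .nil v, h⟩
    · rintro ⟨z, hz, h⟩; cases hz; exact h
  | cons e t ih =>
    constructor
    · intro h
      rw [List.cons_append, isPath_cons_iff] at h
      obtain ⟨rfl, h1⟩ := h
      obtain ⟨z, hz1, hz2⟩ := ih.1 h1
      exact ⟨z, .cons e hz1, hz2⟩
    · rintro ⟨z, hz, h⟩
      rw [isPath_cons_iff] at hz
      obtain ⟨rfl, h1⟩ := hz
      exact .cons e (ih.2 ⟨z, h1, h⟩)

lemma isPath_snoc {v u : G.V} {l : List G.E} {e : G.E} :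
    G.IsPath v (l ++ [e]) u ↔ G.IsPath v l (G.r e) ∧ u = G.s e := by
  rw [isPath_append]
  constructor
  · rintro ⟨z, hz, h⟩
    rw [isPath_cons_iff] at h
    obtain ⟨rfl, h1⟩ := h
    rw [isPath_nil_iff] at h1
    exact ⟨hz, h1.symm⟩
  · rintro ⟨h, rfl⟩
    exact ⟨G.r e, h, .cons e (.nil _)⟩

lemma not_containsCycle_nil : ¬ G.ContainsCycle [] := by
  rintro ⟨p, c, q, h, hc, -⟩
  rw [eq_comm, List.append_eq_nil_iff, List.append_eq_nil_iff] at h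
  exact hc h.1.2

lemma containsCycle_infix {p m q : List G.E} (h : G.ContainsCycle m) :
    G.ContainsCycle (p ++ m ++ q) := by
  obtain ⟨p', c, q', rfl, hc⟩ := h
  exact ⟨p ++ p', c, q' ++ q, by simp, hc⟩

lemma containsCycle_suffix {p m : List G.E} (h : G.ContainsCycle m) :
    G.ContainsCycle (p ++ m) := by
  simpa using containsCycle_infix (p := p) (q := []) h

lemma containsCycle_prefix {m q : List G.E} (h : G.ContainsCycle m) :
    G.ContainsCycle (m ++ q) := by
  simpa using containsCycle_infix (p := []) (q := q) h

/-- A cycle lying inside an ambient path is an in-place cycle. -/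
lemma cycle_in_place {z z₂ : G.V} {c : List G.E} (h : G.IsPath z c z₂)
    (hc : G.IsCycle c) : c ≠ [] ∧ z₂ = z ∧ G.IsPath z c z := by
  obtain ⟨hne, u', hu'⟩ := hc
  have hr : z = u' := isPath_rng_eq h hu' hne
  subst hr
  have h2 : z₂ = z := isPath_src_eq h hu'
  exact ⟨hne, h2, h2 ▸ h⟩

end DirGraph

namespace Desing

open DirGraph

variable {E F : DirGraph} (D : Desing E F)

/-- `w` is in the image of the embedded vertices. -/
def Img (w : F.V) : Prop := ∃ v₀ : E.V, D.ι v₀ = w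

lemma φ_nil (v : E.V) : D.φ [] = [] := by
  have h := D.φ_comp v v v [] [] (.nil v) (.nil v)
  simp only [List.nil_append] at h
  exact (List.self_eq_append_right.1 h)

lemma φ_ne_nil {v u : E.V} {l : List E.E} (h : E.IsPath v l u) (hl : l ≠ []) :
    D.φ l ≠ [] := by
  intro hφ
  apply hl
  exact D.φ_inj l [] ⟨v, u, h⟩ ⟨v, v, .nil v⟩ (hφ.trans (D.φ_nil v).symm)

/-- Split a path of `E` according to a splitting of its image at an embedded vertex. -/
lemma φ_split {v u t : E.V} {a : List E.E} {m₁ m₂ : List F.E}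
    (ha : E.IsPath v a u) (hsplit : D.φ a = m₁ ++ m₂)
    (h₁ : F.IsPath (D.ι v) m₁ (D.ι t)) (h₂ : F.IsPath (D.ι t) m₂ (D.ι u)) :
    ∃ a₁ a₂, a = a₁ ++ a₂ ∧ D.φ a₁ = m₁ ∧ D.φ a₂ = m₂ ∧
      E.IsPath v a₁ t ∧ E.IsPath t a₂ u := by
  obtain ⟨a₁, hp₁, hφ₁⟩ := D.φ_surj v t m₁ h₁
  obtain ⟨a₂, hp₂, hφ₂⟩ := D.φ_surj t u m₂ h₂
  have hcomp : D.φ (a₁ ++ a₂) = m₁ ++ m₂ := by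
    rw [D.φ_comp v t u a₁ a₂ hp₁ hp₂, hφ₁, hφ₂]
  have : a = a₁ ++ a₂ := by
    apply D.φ_inj a (a₁ ++ a₂) ⟨v, u, ha⟩ ⟨v, u, isPath_append.2 ⟨t, hp₁, hp₂⟩⟩
    rw [hcomp, hsplit]
  exact ⟨a₁, a₂, this, hφ₁, hφ₂, hp₁, hp₂⟩

/-- Rotate a cycle inside a path ending at an embedded vertex until its base
point is an embedded vertex. -/
lemma rotate_cycle {x : F.V} {u : E.V} :
    ∀ (q p c : List F.E) (z : F.V), F.IsPath x p z → F.IsPath z c z → c ≠ [] →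
    F.IsPath z q (D.ι u) →
    ∃ (p' c' q' : List F.E) (t : E.V), p ++ c ++ q = p' ++ c' ++ q' ∧ c' ≠ [] ∧
      F.IsPath (D.ι t) c' (D.ι t) ∧ F.IsPath x p' (D.ι t) ∧
      F.IsPath (D.ι t) q' (D.ι u) := by
  intro q
  induction q with
  | nil =>
    intro p c z hp hc hne hq
    rw [isPath_nil_iff] at hq
    subst hq
    exact ⟨p, c, [], u, rfl, hne, hc, hp, .nil _⟩
  | cons f q₁ ih =>
    intro p c z hp hc hne hq
    by_cases himg : D.Img z
    · obtain ⟨t, rfl⟩ := himg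
      exact ⟨p, c, f :: q₁, t, rfl, hne, hc, hp, hq⟩
    · -- z is a tail vertex; the unique edge into z is both head of c and head of q
      rw [isPath_cons_iff] at hq
      obtain ⟨hzf, hq₁⟩ := hq
      obtain ⟨e, c₁, rfl⟩ : ∃ e c₁, c = e :: c₁ := by
        cases c with
        | nil => exact absurd rfl hne
        | cons e c₁ => exact ⟨e, c₁, rfl⟩
      rw [isPath_cons_iff] at hc
      obtain ⟨hze, hc₁⟩ := hc
      obtain ⟨g, -, hgu⟩ := D.tail_rng z himg
      have hef : e = f := by
        rw [hgu e hze.symm, hgu f hzf.symm]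
      subst hef
      -- rotate
      have hc' : F.IsPath (F.s e) (c₁ ++ [e]) (F.s e) := by
        rw [isPath_snoc]
        exact ⟨hze ▸ hc₁, rfl⟩
      have hp' : F.IsPath x (p ++ [e]) (F.s e) := by
        rw [isPath_snoc]
        exact ⟨hzf ▸ hp, rfl⟩
      obtain ⟨p', c', q', t, heq, h1, h2, h3, h4⟩ :=
        ih (p ++ [e]) (c₁ ++ [e]) (F.s e) hp' hc' (by simp) hq₁
      refine ⟨p', c', q', t, ?_, h1, h2, h3, h4⟩
      rw [← heq]
      simp
end Desing

namespace Desing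

open DirGraph

variable {E F : DirGraph} (D : Desing E F)

lemma containsCycle_φ {v u : E.V} {a : List E.E} (ha : E.IsPath v a u)
    (hc : E.ContainsCycle a) : F.ContainsCycle (D.φ a) := by
  obtain ⟨p, c, q, rfl, hcyc⟩ := hc
  obtain ⟨z₂, hpc, hq⟩ := isPath_append.1 ha
  obtain ⟨z, hp, hcz'⟩ := isPath_append.1 hpc
  obtain ⟨hne, hz, hcz⟩ := cycle_in_place hcz' hcyc
  rw [hz] at hpc hq
  have h1 : D.φ (p ++ c ++ q) = D.φ p ++ D.φ c ++ D.φ q := by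
    rw [D.φ_comp v z u (p ++ c) q hpc hq, D.φ_comp v z z p c hp hcz]
  rw [h1]
  exact ⟨D.φ p, D.φ c, D.φ q, rfl, D.φ_ne_nil hcz hne, D.ι z,
    D.φ_path z z c hcz⟩

lemma containsCycle_of_φ {v u : E.V} {a : List E.E} (ha : E.IsPath v a u)
    (hc : F.ContainsCycle (D.φ a)) : E.ContainsCycle a := by
  obtain ⟨p, c, q, hdec, hcyc⟩ := hc
  have hφa : F.IsPath (D.ι v) (D.φ a) (D.ι u) := D.φ_path v u a ha
  rw [hdec] at hφa
  obtain ⟨z₂, hpc, hq⟩ := isPath_append.1 hφa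
  obtain ⟨z, hp, hcz'⟩ := isPath_append.1 hpc
  obtain ⟨hne, hz, hcz⟩ := cycle_in_place hcz' hcyc
  rw [hz] at hpc hq
  obtain ⟨p', c', q', t, heq, h1, h2, h3, h4⟩ := D.rotate_cycle q p c z hp hcz hne hq
  have hdec' : D.φ a = p' ++ (c' ++ q') := by rw [hdec, heq]; simp
  obtain ⟨a₁, a₂, rfl, hφ₁, hφ₂, hp₁, hp₂⟩ :=
    D.φ_split ha hdec' h3 (isPath_append.2 ⟨D.ι t, h2, h4⟩)
  obtain ⟨a₃, a₄, rfl, hφ₃, hφ₄, hp₃, hp₄⟩ := D.φ_split hp₂ hφ₂ h2 h4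
  have ha₃ : a₃ ≠ [] := by
    rintro rfl
    rw [D.φ_nil t] at hφ₃
    exact h1 hφ₃.symm
  exact ⟨a₁, a₃, a₄, by simp, ha₃, t, hp₃⟩

lemma minimal_of_φ {v w u : E.V} {a b : List E.E} (ha : E.IsPath v a u)
    (hb : E.IsPath w b u) (h : F.Minimal (D.φ a) (D.φ b)) : E.Minimal a b := by
  intro a' b' n h1 h2
  obtain ⟨z, ha', hn⟩ := isPath_append.1 (h1 ▸ ha)
  obtain ⟨z', hb', hn'⟩ := isPath_append.1 (h2 ▸ hb)
  have hφ1 : D.φ a = D.φ a' ++ D.φ n := by rw [h1, D.φ_comp v z u a' n ha' hn]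
  rcases eq_or_ne n [] with rfl | hne
  · rfl
  have hzz : z = z' := isPath_rng_eq hn hn' hne
  subst hzz
  have hφ2 : D.φ b = D.φ b' ++ D.φ n := by rw [h2, D.φ_comp w z u b' n hb' hn']
  exact absurd (h (D.φ a') (D.φ b') (D.φ n) hφ1 hφ2) (D.φ_ne_nil hn hne)

lemma min_contra_img {v w u t : E.V} {a b : List E.E} {a' b' n : List F.E}
    (ha : E.IsPath v a u) (hb : E.IsPath w b u) (hmin : E.Minimal a b)
    (h1 : D.φ a = a' ++ n) (h2 : D.φ b = b' ++ n) (hne : n ≠ [])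
    (ha' : F.IsPath (D.ι v) a' (D.ι t)) (hn : F.IsPath (D.ι t) n (D.ι u))
    (hb' : F.IsPath (D.ι w) b' (D.ι t)) : False := by
  obtain ⟨a₁, n₁, rfl, hφa₁, hφn₁, hpa₁, hpn₁⟩ := D.φ_split ha h1 ha' hn
  obtain ⟨b₁, n₂, rfl, hφb₁, hφn₂, hpb₁, hpn₂⟩ := D.φ_split hb h2 hb' hn
  have hn12 : n₁ = n₂ :=
    D.φ_inj n₁ n₂ ⟨t, u, hpn₁⟩ ⟨t, u, hpn₂⟩ (hφn₁.trans hφn₂.symm)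
  have := hmin a₁ b₁ n₁ rfl (by rw [hn12])
  subst this
  rw [D.φ_nil t] at hφn₁
  exact hne hφn₁.symm

/-- Key: minimality transfers from `E` to `F`. -/
lemma minimal_φ {v w u : E.V} {a b : List E.E} (ha : E.IsPath v a u)
    (hb : E.IsPath w b u) (hmin : E.Minimal a b) : F.Minimal (D.φ a) (D.φ b) := by
  have hφa : F.IsPath (D.ι v) (D.φ a) (D.ι u) := D.φ_path v u a ha
  have hφb : F.IsPath (D.ι w) (D.φ b) (D.ι u) := D.φ_path w u b hb
  intro a' b' n h1 h2
  by_contra hne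
  induction a' using List.reverseRecOn generalizing b' n with
  | nil =>
    obtain ⟨x, ha', hn⟩ := isPath_append.1 (h1 ▸ hφa)
    obtain ⟨x', hb', hn'⟩ := isPath_append.1 (h2 ▸ hφb)
    rw [isPath_nil_iff] at ha'
    subst ha'
    have hx' : x' = D.ι v := isPath_rng_eq hn' hn hne
    subst hx'
    exact D.min_contra_img ha hb hmin h1 h2 hne (.nil _) hn hb'
  | append_singleton a'' g ih =>
    obtain ⟨x, ha', hn⟩ := isPath_append.1 (h1 ▸ hφa)
    obtain ⟨x', hb', hn'⟩ := isPath_append.1 (h2 ▸ hφb)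
    rw [isPath_rng_eq hn' hn hne] at hb'
    by_cases himg : D.Img x
    · obtain ⟨t, rfl⟩ := himg
      exact D.min_contra_img ha hb hmin h1 h2 hne ha' hn hb'
    · -- x is a tail vertex: strip the common last edge
      rw [isPath_snoc] at ha'
      obtain ⟨ha'', hxg⟩ := ha'
      rcases List.eq_nil_or_concat b' with rfl | ⟨b'', g', rfl⟩
      · rw [isPath_nil_iff] at hb'
        exact himg ⟨w, hb'⟩
      · rw [List.concat_eq_append] at h2 hb'
        rw [isPath_snoc] at hb'
        obtain ⟨hb'', hxg'⟩ := hb'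
        obtain ⟨f, -, hfu⟩ := D.tail_src x himg
        have hgf : g = f := hfu g hxg.symm
        have hgf' : g' = f := hfu g' hxg'.symm
        have hgg' : g' = g := hgf'.trans hgf.symm
        rw [hgg'] at h2
        exact ih b'' (g :: n) (by rw [h1]; simp) (by rw [h2]; simp) (by simp)

end Desing

namespace Desing

open DirGraph

variable {E F : DirGraph}

/-- Paths all of whose vertices, except possibly the source (final vertex),
are tail vertices. -/
inductive TP (D : Desing E F) : F.V → List F.E → F.V → Prop
  | nil (v : F.V) : TP D v [] v
  | cons (e : F.E) {l : List F.E} {u : F.V} :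
      ¬D.Img (F.r e) → TP D (F.s e) l u → TP D (F.r e) (e :: l) u

/-- Paths all of whose vertices, except possibly the range (initial vertex),
are tail vertices. -/
inductive TS (D : Desing E F) : F.V → List F.E → F.V → Prop
  | nil (v : F.V) : TS D v [] v
  | cons (e : F.E) {l : List F.E} {u : F.V} :
      ¬D.Img (F.s e) → TS D (F.s e) l u → TS D (F.r e) (e :: l) u

variable {D : Desing E F}

lemma TP.isPath {v u : F.V} {l : List F.E} (h : TP D v l u) : F.IsPath v l u := by
  induction h with
  | nil v => exact .nil v
  | cons e h1 h2 ih => exact .cons e ih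

lemma TS.isPath {v u : F.V} {l : List F.E} (h : TS D v l u) : F.IsPath v l u := by
  induction h with
  | nil v => exact .nil v
  | cons e h1 h2 ih => exact .cons e ih

lemma tp_cases {v u : F.V} {l : List F.E} (h : TP D v l u) :
    (l = [] ∧ u = v) ∨
      ∃ e t, l = e :: t ∧ v = F.r e ∧ ¬D.Img (F.r e) ∧ TP D (F.s e) t u := by
  cases h with
  | nil v => exact .inl ⟨rfl, rfl⟩
  | cons e h1 h2 => exact .inr ⟨e, _, rfl, rfl, h1, h2⟩

lemma ts_nil_inv {z x : F.V} (h : TS D z [] x) : x = z := by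
  cases h; rfl

lemma ts_snoc' {z y : F.V} {t : List F.E} (h : TS D z t y) :
    ∀ {e : F.E}, y = F.r e → ¬D.Img (F.s e) → TS D z (t ++ [e]) (F.s e) := by
  induction h with
  | nil v =>
    intro e hy hni
    rw [hy]
    exact .cons e hni (.nil _)
  | cons f h1 h2 ih =>
    intro e hy hni
    exact .cons f h1 (ih hy hni)

lemma ts_snoc {z : F.V} {t : List F.E} {e : F.E} (h : TS D z t (F.r e))
    (hni : ¬D.Img (F.s e)) : TS D z (t ++ [e]) (F.s e) :=
  ts_snoc' h rfl hni

lemma ts_snoc_inv {z x : F.V} {t : List F.E} {e : F.E} (h : TS D z (t ++ [e]) x) :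
    TS D z t (F.r e) ∧ x = F.s e ∧ ¬D.Img (F.s e) := by
  induction t generalizing z with
  | nil =>
    cases h with
    | cons f h1 h2 =>
      have := ts_nil_inv h2
      exact ⟨.nil _, this, this ▸ h1⟩
  | cons f t' ih =>
    cases h with
    | cons f h1 h2 =>
      obtain ⟨h3, h4, h5⟩ := ih h2
      exact ⟨.cons f h1 h3, h4, h5⟩

/-- Uniqueness of the forced prefix: two tail-prefixes from the same vertex
ending at embedded vertices agree. -/
lemma tp_unique {v z z' : F.V} {a a' : List F.E} (h : TP D v a z) (h' : TP D v a' z')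
    (hz : D.Img z) (hz' : D.Img z') : a = a' := by
  induction h generalizing a' with
  | nil v =>
    rcases tp_cases h' with ⟨rfl, rfl⟩ | ⟨e, t, rfl, rfl, hni, -⟩
    · rfl
    · exact absurd hz hni
  | cons e hni htp ih =>
    rcases tp_cases h' with ⟨rfl, rfl⟩ | ⟨e', t', rfl, hre, hni', htp'⟩
    · exact absurd hz' hni
    · obtain ⟨f, -, hfu⟩ := D.tail_rng (F.r e) hni
      have he : e = f := hfu e rfl
      have he' : e' = f := hfu e' hre.symm
      have hee : e' = e := he'.trans he.symm
      have hl := ih (hee ▸ htp') hz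
      rw [hee, ← hl]

/-- Uniqueness of the forced suffix. -/
lemma ts_unique {z z' x : F.V} {t t' : List F.E} (h : TS D z t x) (h' : TS D z' t' x)
    (hz : D.Img z) (hz' : D.Img z') : t = t' := by
  induction t using List.reverseRecOn generalizing t' z z' x with
  | nil =>
    have hxz := ts_nil_inv h
    subst hxz
    rcases List.eq_nil_or_concat t' with rfl | ⟨t₀, e', rfl⟩
    · rfl
    · rw [List.concat_eq_append] at h'
      obtain ⟨-, h4, h5⟩ := ts_snoc_inv h'
      exact absurd (h4 ▸ hz) h5
  | append_singleton t₀ e ih =>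
    obtain ⟨h3, h4, h5⟩ := ts_snoc_inv h
    rcases List.eq_nil_or_concat t' with rfl | ⟨t₀', e', rfl⟩
    · exact absurd ((ts_nil_inv h').symm ▸ hz') (h4 ▸ h5)
    · rw [List.concat_eq_append] at h' ⊢
      obtain ⟨h3', h4', h5'⟩ := ts_snoc_inv h'
      obtain ⟨f, -, hfu⟩ := D.tail_src x (h4 ▸ h5)
      have he : e = f := hfu e h4.symm
      have he' : e' = f := hfu e' h4'.symm
      have hee : e' = e := he'.trans he.symm
      subst hee
      rw [ih h3 h3' hz hz']

/-- `a` (a path with range `v`) passes through an embedded vertex. -/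
def Touch (D : Desing E F) (v : F.V) (a : List F.E) : Prop :=
  ∃ a₁ a₂ z, a = a₁ ++ a₂ ∧ F.IsPath v a₁ z ∧ D.Img z

lemma touch_here {v : F.V} {a : List F.E} (h : D.Img v) : Touch D v a :=
  ⟨[], a, v, rfl, .nil v, h⟩

lemma touch_cons {e : F.E} {rest : List F.E} (h : Touch D (F.s e) rest) :
    Touch D (F.r e) (e :: rest) := by
  obtain ⟨a₁, a₂, z, rfl, hp, hz⟩ := h
  exact ⟨e :: a₁, a₂, z, rfl, .cons e hp, hz⟩

/-- Any nonempty closed path passes through an embedded vertex. -/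
lemma cycle_touch {v : F.V} {a : List F.E} (h : F.IsPath v a v) (hne : a ≠ []) :
    Touch D v a := by
  obtain ⟨e, hmem, w₀, hw⟩ := D.tail_acyclic v a ⟨hne, v, h⟩ h
  obtain ⟨p, q, rfl⟩ := List.append_of_mem hmem
  obtain ⟨z, hp, hq⟩ := isPath_append.1 h
  rw [isPath_cons_iff] at hq
  exact ⟨p, e :: q, z, rfl, hp, w₀, hq.1 ▸ hw⟩

/-- Split a touching path at the first embedded vertex. -/
lemma splitFirstT {v x : F.V} {a : List F.E} (h : F.IsPath v a x) (ht : Touch D v a) :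
    ∃ h₁ b z, a = h₁ ++ b ∧ TP D v h₁ z ∧ D.Img z ∧ F.IsPath z b x := by
  induction a generalizing v with
  | nil =>
    obtain ⟨a₁, a₂, z, heq, hp₁, hz⟩ := ht
    rw [eq_comm, List.append_eq_nil_iff] at heq
    obtain ⟨rfl, rfl⟩ := heq
    rw [isPath_nil_iff] at hp₁
    subst hp₁
    exact ⟨[], [], v, rfl, .nil v, hz, h⟩
  | cons e rest ih =>
    by_cases himg : D.Img v
    · exact ⟨[], e :: rest, v, rfl, .nil v, himg, h⟩
    · rw [isPath_cons_iff] at h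
      obtain ⟨rfl, hrest⟩ := h
      obtain ⟨a₁, a₂, z, heq, hp₁, hz⟩ := ht
      cases a₁ with
      | nil =>
        rw [isPath_nil_iff] at hp₁
        exact absurd (hp₁ ▸ hz) himg
      | cons e₁ a₁' =>
        rw [List.cons_append] at heq
        injection heq with he heq'
        subst he
        rw [isPath_cons_iff] at hp₁
        obtain ⟨h₁', b, z₁, hdec, htp, hz₁, hpb⟩ :=
          ih hrest ⟨a₁', a₂, z, heq', hp₁.2, hz⟩
        exact ⟨e :: h₁', b, z₁, by rw [hdec, List.cons_append], .cons e himg htp,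
          hz₁, hpb⟩

/-- Split a path starting at an embedded vertex at the last embedded vertex. -/
lemma splitLast {z x : F.V} {b : List F.E} (h : F.IsPath z b x) (hz : D.Img z) :
    ∃ m t z₂, b = m ++ t ∧ F.IsPath z m z₂ ∧ D.Img z₂ ∧ TS D z₂ t x := by
  induction b using List.reverseRecOn generalizing x with
  | nil =>
    rw [isPath_nil_iff] at h
    exact ⟨[], [], z, rfl, .nil z, hz, h ▸ .nil z⟩
  | append_singleton b₀ e ih =>
    rw [isPath_snoc] at h
    obtain ⟨hb₀, rfl⟩ := h
    by_cases himg : D.Img (F.s e)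
    · exact ⟨b₀ ++ [e], [], F.s e, by simp, isPath_snoc.2 ⟨hb₀, rfl⟩, himg, .nil _⟩
    · obtain ⟨m, t', z₂, rfl, hm, hz₂, hts⟩ := ih hb₀
      exact ⟨m, t' ++ [e], z₂, by simp, hm, hz₂, ts_snoc hts himg⟩

/-- Non-touching paths between two fixed vertices are unique. -/
lemma nt_unique {v x : F.V} {a a' : List F.E} (h : F.IsPath v a x) (h' : F.IsPath v a' x)
    (hn : ¬Touch D v a) (hn' : ¬Touch D v a') : a = a' := by
  induction a generalizing v a' with
  | nil =>
    rw [isPath_nil_iff] at h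
    subst h
    cases a' with
    | nil => rfl
    | cons e' rest' => exact absurd (cycle_touch h' (by simp)) hn'
  | cons e rest ih =>
    cases a' with
    | nil =>
      rw [isPath_nil_iff] at h'
      subst h'
      exact absurd (cycle_touch h (by simp)) hn
    | cons e' rest' =>
      have himg : ¬D.Img v := fun h0 => hn (touch_here h0)
      rw [isPath_cons_iff] at h h'
      obtain ⟨rfl, hrest⟩ := h
      obtain ⟨hre', hrest'⟩ := h'
      obtain ⟨f, -, hfu⟩ := D.tail_rng (F.r e) himg
      have hee : e' = e := (hfu e' hre'.symm).trans (hfu e rfl).symm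
      subst hee
      rw [ih hrest hrest' (fun h0 => hn (touch_cons h0)) (fun h0 => hn' (touch_cons h0))]

end Desing

namespace Desing

open DirGraph

variable {E F : DirGraph} {D : Desing E F}

lemma tp_unique' {v z z' : F.V} {a a' : List F.E} (h : TP D v a z) (h' : TP D v a' z')
    (hz : D.Img z) (hz' : D.Img z') : a = a' ∧ z = z' := by
  have ha := tp_unique h h' hz hz'
  subst ha
  exact ⟨rfl, isPath_src_eq h.isPath h'.isPath⟩

lemma ts_unique' {z z' x : F.V} {t t' : List F.E} (h : TS D z t x) (h' : TS D z' t' x)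
    (hz : D.Img z) (hz' : D.Img z') : t = t' ∧ z = z' := by
  have ht := ts_unique h h' hz hz'
  subst ht
  rcases eq_or_ne t [] with rfl | hne
  · exact ⟨rfl, (ts_nil_inv h).symm.trans (ts_nil_inv h')⟩
  · exact ⟨rfl, isPath_rng_eq h.isPath h'.isPath hne⟩

/-- In a graph with finite ancestry, there are finitely many cycle-free paths
between any two vertices. -/
lemma cfE_finite (hE : E.FiniteAncestry) (v u : E.V) :
    {l : List E.E | E.IsPath v l u ∧ ¬E.ContainsCycle l}.Finite := by
  apply Set.Finite.of_finite_image (f := fun l => (l, ([] : List E.E)))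
  · apply Set.Finite.subset (hE v u)
    rintro ⟨a, b⟩ ⟨l, ⟨hl, hcf⟩, heq⟩
    obtain ⟨rfl, rfl⟩ : l = a ∧ ([] : List E.E) = b := by
      simpa [Prod.ext_iff] using heq
    exact ⟨⟨u, hl, .nil u⟩, fun a' b' n _ h2 => (List.append_eq_nil_iff.1 h2.symm).2, hcf,
      not_containsCycle_nil⟩
  · intro l₁ _ l₂ _ h
    simpa using congrArg Prod.fst h

/-- Finitely many cycle-free paths between any two vertices of the
desingularization. -/
lemma cfF_finite (D : Desing E F) (hE : E.FiniteAncestry) (v x : F.V) :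
    {a : List F.E | F.IsPath v a x ∧ ¬F.ContainsCycle a}.Finite := by
  have hsub : {a : List F.E | F.IsPath v a x ∧ ¬F.ContainsCycle a} ⊆
      {a : List F.E | (F.IsPath v a x ∧ ¬F.ContainsCycle a) ∧ Touch D v a} ∪
      {a : List F.E | (F.IsPath v a x ∧ ¬F.ContainsCycle a) ∧ ¬Touch D v a} := by
    intro a ha
    by_cases ht : Touch D v a
    · exact Or.inl ⟨ha, ht⟩
    · exact Or.inr ⟨ha, ht⟩
  apply Set.Finite.subset _ hsub
  apply Set.Finite.union
  · -- touching part
    rcases Set.eq_empty_or_nonempty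
      {a : List F.E | (F.IsPath v a x ∧ ¬F.ContainsCycle a) ∧ Touch D v a} with he | hne
    · rw [he]; exact Set.finite_empty
    obtain ⟨a₀, ⟨hp₀, -⟩, ht₀⟩ := hne
    obtain ⟨h₀, b₀, z₀, hdec₀, htp₀, hz₀, hpb₀⟩ := splitFirstT hp₀ ht₀
    obtain ⟨m₀, t₀, z₂₀, hbdec₀, hm₀, hz₂₀, hts₀⟩ := splitLast hpb₀ hz₀
    obtain ⟨v₁, hv₁⟩ := hz₀
    obtain ⟨u₁, hu₁⟩ := hz₂₀
    apply Set.Finite.subset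
      ((cfE_finite hE v₁ u₁).image (fun l => h₀ ++ (D.φ l ++ t₀)))
    rintro a ⟨⟨hp, hcf⟩, ht⟩
    obtain ⟨h₁, b, z, hdec, htp, hz, hpb⟩ := splitFirstT hp ht
    obtain ⟨hh, hzz⟩ := tp_unique' htp htp₀ hz ⟨v₁, hv₁⟩
    obtain ⟨m, t, z₂, hbdec, hm, hz₂, hts⟩ := splitLast hpb hz
    obtain ⟨htt, hzz₂⟩ := ts_unique' hts hts₀ hz₂ ⟨u₁, hu₁⟩
    rw [hzz, ← hv₁, hzz₂, ← hu₁] at hm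
    obtain ⟨l, hl, hφl⟩ := D.φ_surj v₁ u₁ m hm
    refine ⟨l, ⟨hl, ?_⟩, ?_⟩
    · intro hcc
      apply hcf
      rw [hdec, hbdec]
      exact containsCycle_suffix (containsCycle_prefix ((hφl ▸ D.containsCycle_φ hl hcc)))
    · show h₀ ++ (D.φ l ++ t₀) = a
      rw [hφl, ← htt, ← hbdec, ← hh, ← hdec]
  · -- non-touching part: at most one element
    apply Set.Subsingleton.finite
    rintro a ⟨⟨hp, -⟩, ht⟩ a' ⟨⟨hp', -⟩, ht'⟩
    exact nt_unique hp hp' ht ht'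

/-- The set of MCF pairs in `F` whose common source is an embedded vertex is
finite. -/
lemma mcf_img_finite (D : Desing E F) (hE : E.FiniteAncestry) (v w : F.V) :
    {p : List F.E × List F.E |
      (∃ u₀ : E.V, F.IsPath v p.1 (D.ι u₀) ∧ F.IsPath w p.2 (D.ι u₀)) ∧
        F.Minimal p.1 p.2 ∧ ¬F.ContainsCycle p.1 ∧ ¬F.ContainsCycle p.2}.Finite := by
  set S := {p : List F.E × List F.E |
      (∃ u₀ : E.V, F.IsPath v p.1 (D.ι u₀) ∧ F.IsPath w p.2 (D.ι u₀)) ∧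
        F.Minimal p.1 p.2 ∧ ¬F.ContainsCycle p.1 ∧ ¬F.ContainsCycle p.2} with hS
  rcases Set.eq_empty_or_nonempty S with he | hne
  · rw [he]; exact Set.finite_empty
  obtain ⟨⟨a₀, b₀⟩, ⟨u₀, hpa₀, hpb₀⟩, -, -, -⟩ := hne
  have hta : Touch D v a₀ := ⟨a₀, [], D.ι u₀, (List.append_nil a₀).symm, hpa₀, u₀, rfl⟩
  have htb : Touch D w b₀ := ⟨b₀, [], D.ι u₀, (List.append_nil b₀).symm, hpb₀, u₀, rfl⟩
  obtain ⟨ha₀, ca₀, za, hadec₀, htpa₀, hza, hpca₀⟩ := splitFirstT hpa₀ hta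
  obtain ⟨hb₀, cb₀, zb, hbdec₀, htpb₀, hzb, hpcb₀⟩ := splitFirstT hpb₀ htb
  obtain ⟨v₁, hv₁⟩ := hza
  obtain ⟨w₁, hw₁⟩ := hzb
  apply Set.Finite.subset ((hE v₁ w₁).image
    (fun q => (ha₀ ++ D.φ q.1, hb₀ ++ D.φ q.2)))
  rintro ⟨a, b⟩ ⟨⟨u₂, hpa, hpb⟩, hmin, hcfa, hcfb⟩
  replace hpa : F.IsPath v a (D.ι u₂) := hpa
  replace hpb : F.IsPath w b (D.ι u₂) := hpb
  replace hmin : F.Minimal a b := hmin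
  replace hcfa : ¬F.ContainsCycle a := hcfa
  replace hcfb : ¬F.ContainsCycle b := hcfb
  obtain ⟨ha, ca, za', hadec, htpa, hza', hpca⟩ := splitFirstT hpa
    ⟨a, [], D.ι u₂, (List.append_nil a).symm, hpa, u₂, rfl⟩
  obtain ⟨hb, cb, zb', hbdec, htpb, hzb', hpcb⟩ := splitFirstT hpb
    ⟨b, [], D.ι u₂, (List.append_nil b).symm, hpb, u₂, rfl⟩
  obtain ⟨hha, hzza⟩ := tp_unique' htpa htpa₀ hza' ⟨v₁, hv₁⟩
  obtain ⟨hhb, hzzb⟩ := tp_unique' htpb htpb₀ hzb' ⟨w₁, hw₁⟩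
  rw [hzza, ← hv₁] at hpca
  rw [hzzb, ← hw₁] at hpcb
  obtain ⟨la, hla, hφla⟩ := D.φ_surj v₁ u₂ ca hpca
  obtain ⟨lb, hlb, hφlb⟩ := D.φ_surj w₁ u₂ cb hpcb
  have hminE : E.Minimal la lb := by
    intro a' b' n h1 h2
    obtain ⟨y, hy1, hy2⟩ := isPath_append.1 (h1 ▸ hla)
    obtain ⟨y', hy1', hy2'⟩ := isPath_append.1 (h2 ▸ hlb)
    rcases eq_or_ne n [] with rfl | hn
    · rfl
    exfalso
    have hyy : y = y' := isPath_rng_eq hy2 hy2' hn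
    subst hyy
    have hφa : D.φ la = D.φ a' ++ D.φ n := by
      rw [h1, D.φ_comp v₁ y u₂ a' n hy1 hy2]
    have hφb : D.φ lb = D.φ b' ++ D.φ n := by
      rw [h2, D.φ_comp w₁ y u₂ b' n hy1' hy2']
    have := hmin (ha₀ ++ D.φ a') (hb₀ ++ D.φ b') (D.φ n)
      (by rw [hadec, hha, hφla.symm, hφa, List.append_assoc])
      (by rw [hbdec, hhb, hφlb.symm, hφb, List.append_assoc])
    exact D.φ_ne_nil hy2 hn this
  refine ⟨(la, lb), ⟨⟨u₂, hla, hlb⟩, hminE, ?_, ?_⟩, ?_⟩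
  · intro hcc
    exact hcfa (hadec ▸ containsCycle_suffix (hφla ▸ D.containsCycle_φ hla hcc))
  · intro hcc
    exact hcfb (hbdec ▸ containsCycle_suffix (hφlb ▸ D.containsCycle_φ hlb hcc))
  · show (ha₀ ++ D.φ la, hb₀ ++ D.φ lb) = (a, b)
    rw [hφla, hφlb, ← hha, ← hhb, ← hadec, ← hbdec]

end Desing

/-- Auxiliary version of the main theorem. -/
theorem finite_ancestry_iff_desing_aux (E F : DirGraph) (D : Desing E F) :
    E.FiniteAncestry ↔ F.FiniteAncestry := by
  open DirGraph Desing in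
  constructor
  · -- E finite ancestry → F finite ancestry
    intro hE v w
    have hsub : {p : List F.E × List F.E | F.MCFPair v w p.1 p.2} ⊆
        {p : List F.E × List F.E |
          (∃ u₀ : E.V, F.IsPath v p.1 (D.ι u₀) ∧ F.IsPath w p.2 (D.ι u₀)) ∧
            F.Minimal p.1 p.2 ∧ ¬F.ContainsCycle p.1 ∧ ¬F.ContainsCycle p.2} ∪
        ((fun b => (([] : List F.E), b)) ''
          {b : List F.E | F.IsPath w b v ∧ ¬F.ContainsCycle b} ∪
        (fun a => (a, ([] : List F.E))) ''
          {a : List F.E | F.IsPath v a w ∧ ¬F.ContainsCycle a}) := by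
      rintro ⟨a, b⟩ ⟨⟨u, hpa, hpb⟩, hmin, hcfa, hcfb⟩
      replace hpa : F.IsPath v a u := hpa
      replace hpb : F.IsPath w b u := hpb
      replace hmin : F.Minimal a b := hmin
      replace hcfa : ¬F.ContainsCycle a := hcfa
      replace hcfb : ¬F.ContainsCycle b := hcfb
      by_cases himg : D.Img u
      · obtain ⟨u₀, rfl⟩ := himg
        exact Or.inl ⟨⟨u₀, hpa, hpb⟩, hmin, hcfa, hcfb⟩
      · -- the common source is a tail vertex: one of the paths is empty
        have hone : a = [] ∨ b = [] := by
          by_contra hcon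
          push_neg at hcon
          obtain ⟨ha, hb⟩ := hcon
          obtain ⟨a₁, e, rfl⟩ := (List.eq_nil_or_concat a).resolve_left ha
          obtain ⟨b₁, e', rfl⟩ := (List.eq_nil_or_concat b).resolve_left hb
          simp only [List.concat_eq_append] at hpa hpb hmin
          rw [isPath_snoc] at hpa hpb
          obtain ⟨f, -, hfu⟩ := D.tail_src u himg
          have he : e = f := hfu e hpa.2.symm
          have he' : e' = f := hfu e' hpb.2.symm
          have hee : e' = e := he'.trans he.symm
          exact List.cons_ne_nil e [] (hmin a₁ b₁ [e] rfl (by rw [hee]))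
        rcases hone with rfl | rfl
        · rw [isPath_nil_iff] at hpa
          subst hpa
          exact Or.inr (Or.inl ⟨b, ⟨hpb, hcfb⟩, rfl⟩)
        · rw [isPath_nil_iff] at hpb
          subst hpb
          exact Or.inr (Or.inr ⟨a, ⟨hpa, hcfa⟩, rfl⟩)
    apply Set.Finite.subset _ hsub
    exact (mcf_img_finite D hE v w).union
      (((cfF_finite D hE w v).image _).union ((cfF_finite D hE v w).image _))
  · -- F finite ancestry → E finite ancestry
    intro hF v w
    apply Set.Finite.of_finite_image
      (f := fun p : List E.E × List E.E => (D.φ p.1, D.φ p.2))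
    · apply Set.Finite.subset (hF (D.ι v) (D.ι w))
      rintro ⟨ma, mb⟩ ⟨⟨a, b⟩, ⟨⟨u, hpa, hpb⟩, hmin, hcfa, hcfb⟩, heq⟩
      obtain ⟨rfl, rfl⟩ : D.φ a = ma ∧ D.φ b = mb := by
        simpa [Prod.ext_iff] using heq
      refine ⟨⟨D.ι u, D.φ_path v u a hpa, D.φ_path w u b hpb⟩,
        D.minimal_φ hpa hpb hmin, ?_, ?_⟩
      · exact fun hcc => hcfa (D.containsCycle_of_φ hpa hcc)
      · exact fun hcc => hcfb (D.containsCycle_of_φ hpb hcc)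
    · rintro ⟨a, b⟩ ⟨⟨u, hpa, hpb⟩, -⟩ ⟨a', b'⟩ ⟨⟨u', hpa', hpb'⟩, -⟩ heq
      simp only [Prod.mk.injEq] at heq ⊢
      exact ⟨D.φ_inj a a' ⟨v, u, hpa⟩ ⟨v, u', hpa'⟩ heq.1,
        D.φ_inj b b' ⟨w, u, hpb⟩ ⟨w, u', hpb'⟩ heq.2⟩

/-- `E` has finite ancestry iff its desingularization does. -/
theorem finite_ancestry_iff_desing (E F : DirGraph) (D : Desing E F) :
    E.FiniteAncestry ↔ F.FiniteAncestry := by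
  exact finite_ancestry_iff_desing_aux E F D
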